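/- Let λ₁λ₂ > 0, Q(u) = (λ₁u₁² + λ₂u₂²)/2, X(u) = (u₁,u₂,Q(u)), and let C₁ ≥ 1, L ≥ 1. There exist r₁ > 0, ρ₀ ∈ (0,1], and C ≥ 1, depending only on λ₁, λ₂, C₁, L, and ‖χ‖_∞, with the following property. Let U ⊂ ℝ² be open with U ⊆ B(0,r₁), set S_Q = X(U) and μ_Q = χ·H²⌊S_Q with χ : ℝ³ → [0,∞) bounded and supported in S_Q. For 0 < ρ ≤ ρ₀ define E^ext_{e₁} := {X(u) : u ∈ U, |n_Q(u)·e₁| ≤ ρ^{1/2}}, with e₁ = (1,0,0). Then for every tube T of direction e₁, radius C₁ρ, and length parameter L, one has μ_Q(S_Q ∩ T ∩ E^ext_{e₁}) ≤ C ρ^{3/2}. -/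

import Mathlib

/-!
On the disc of radius `r₁ = (1 + |λ₁| + |λ₂|)⁻¹` the gradient of `Q` has size at most `1`, so
`X` is Lipschitz there and `|n_Q · e₁|` is comparable to `|λ₁u₁|`. The extreme condition
`|n_Q · e₁| ≤ ρ^{1/2}` thus gives `|u₁| ≤ 2ρ^{1/2}/|λ₁|`, and the tube of radius `C₁ρ` around the
`e₁`-direction gives `|u₂ - (y₀)₂| ≤ C₁ρ`. The set is therefore the `X`-image of a rectangle of area
`O(C₁ρ^{3/2}/|λ₁|)`; Lipschitz maps distort `H²` by a bounded factor, and `χ ≤ Mχ`.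
-/

noncomputable section
open MeasureTheory Metric Set Function
open scoped ENNReal RealInnerProductSpace

abbrev E3 : Type := EuclideanSpace ℝ (Fin 3)
abbrev E2 : Type := EuclideanSpace ℝ (Fin 2)

def mk3 (a b c : ℝ) : E3 := (WithLp.equiv 2 (Fin 3 → ℝ)).symm ![a, b, c]

/-- Quadratic graph parametrization `X(u) = (u₁, u₂, (l₁u₁² + l₂u₂²)/2)`. -/
def Xf (l₁ l₂ : ℝ) (u : E2) : E3 := mk3 (u 0) (u 1) ((l₁ * (u 0) ^ 2 + l₂ * (u 1) ^ 2) / 2)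

/-- Unit normal of the quadratic graph at `X(u)`. -/
def nQ (l₁ l₂ : ℝ) (u : E2) : E3 :=
  (Real.sqrt (1 + l₁ ^ 2 * (u 0) ^ 2 + l₂ ^ 2 * (u 1) ^ 2))⁻¹ •
    mk3 (-(l₁ * u 0)) (-(l₂ * u 1)) 1

/-- The tube `T(v, y₀, s₀, r, L)`. -/
def tube (v y₀ : E3) (s₀ r L : ℝ) : Set E3 :=
  {x | ‖x - ⟪x, v⟫ • v - y₀‖ ≤ r ∧ |⟪x, v⟫ - s₀| ≤ L}

/-- The surface measure `μ_Q = χ·H²⌊S_Q` of the quadratic patch `S_Q = X(U)`. -/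
def muQ (l₁ l₂ : ℝ) (U : Set E2) (χ : E3 → ℝ) : Measure E3 :=
  ((μH[2] : Measure E3).restrict (Xf l₁ l₂ '' U)).withDensity fun x => ENNReal.ofReal (χ x)

def e1 : E3 := mk3 1 0 0

lemma abs_sq_sub_sq_le {x y r : ℝ} (hx : |x| ≤ r) (hy : |y| ≤ r) :
    |x ^ 2 - y ^ 2| ≤ 2 * r * |x - y| := by
  rw [sq_sub_sq, abs_mul]
  gcongr
  linarith [abs_add_le x y]

lemma lipschitzOnWith_quadraticGraph {l₁ l₂ r : ℝ} (hr : (|l₁| + |l₂|) * r ≤ 1) :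
    LipschitzOnWith 1 (fun v : Fin 2 → ℝ => ![v 0, v 1, (l₁ * v 0 ^ 2 + l₂ * v 1 ^ 2) / 2])
      (closedBall 0 r) := by
  refine LipschitzOnWith.of_dist_le_mul fun u hu v hv => ?_
  have hu : ∀ i, |u i| ≤ r := fun i => (norm_le_pi_norm u i).trans (mem_closedBall_zero_iff.1 hu)
  have hv : ∀ i, |v i| ≤ r := fun i => (norm_le_pi_norm v i).trans (mem_closedBall_zero_iff.1 hv)
  have hd : ∀ i, |u i - v i| ≤ dist u v := fun i => dist_le_pi_dist u v i
  rw [NNReal.coe_one, one_mul, dist_pi_le_iff dist_nonneg]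
  intro i
  fin_cases i
  · exact hd 0
  · exact hd 1
  · have hr0 : 0 ≤ 2 * r := by linarith [(abs_nonneg _).trans (hu 0)]
    have hsq : ∀ i, |u i ^ 2 - v i ^ 2| ≤ 2 * r * dist u v := fun i =>
      (abs_sq_sub_sq_le (hu i) (hv i)).trans (mul_le_mul_of_nonneg_left (hd i) hr0)
    calc |(l₁ * u 0 ^ 2 + l₂ * u 1 ^ 2) / 2 - (l₁ * v 0 ^ 2 + l₂ * v 1 ^ 2) / 2|
        = |l₁ * (u 0 ^ 2 - v 0 ^ 2) + l₂ * (u 1 ^ 2 - v 1 ^ 2)| / 2 := by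
          rw [← abs_two, ← abs_div, abs_two]; ring_nf
      _ ≤ (|l₁| * (2 * r * dist u v) + |l₂| * (2 * r * dist u v)) / 2 := by
          gcongr
          refine (abs_add_le _ _).trans ?_
          rw [abs_mul, abs_mul]
          gcongr <;> exact hsq _
      _ = (|l₁| + |l₂|) * r * dist u v := by ring
      _ ≤ dist u v := mul_le_of_le_one_left dist_nonneg hr

/-- The parameter domain carries the sup norm, on which `μH[2]` is Lebesgue measure
(`hausdorffMeasure_pi_real`); `toLp` into `E3` is `√3`-Lipschitz, whence the factor `3`. -/
lemma hausdorffMeasure_image_Xf_le {l₁ l₂ r : ℝ} (hr : (|l₁| + |l₂|) * r ≤ 1)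
    {s : Set (Fin 2 → ℝ)} (hs : s ⊆ closedBall 0 r) :
    μH[2] (Xf l₁ l₂ '' (WithLp.toLp 2 '' s)) ≤ 3 * volume s := by
  have hlip := (PiLp.lipschitzWith_toLp 2 fun _ : Fin 3 => ℝ).comp_lipschitzOnWith
    ((lipschitzOnWith_quadraticGraph hr).mono hs)
  have hK : (((Fintype.card (Fin 3) : NNReal) ^ (1 / (2 : ℝ≥0∞)).toReal * 1 : NNReal) : ℝ≥0∞)
      ^ (2 : ℝ) = 3 := by
    simp only [Fintype.card_fin, mul_one, one_div, ENNReal.toReal_inv, ENNReal.toReal_ofNat]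
    rw [← ENNReal.coe_rpow_of_nonneg _ zero_le_two, ← NNReal.rpow_mul]
    norm_num
  have hvol : (μH[2] : Measure (Fin 2 → ℝ)) = volume := by
    simpa using hausdorffMeasure_pi_real (ι := Fin 2)
  rw [image_image, ← hvol, ← hK]
  exact hlip.hausdorffMeasure_image_le zero_le_two

lemma inner_e1 (x : E3) : ⟪x, e1⟫ = x 0 := by
  simp [e1, mk3, PiLp.inner_apply, Fin.sum_univ_three]

lemma abs_mul_le_two_mul_abs_inner_nQ_e1 {l₁ l₂ : ℝ} {u : E2} (h₁ : |l₁ * u 0| ≤ 1)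
    (h₂ : |l₂ * u 1| ≤ 1) : |l₁ * u 0| ≤ 2 * |⟪nQ l₁ l₂ u, e1⟫| := by
  set w := 1 + l₁ ^ 2 * u 0 ^ 2 + l₂ ^ 2 * u 1 ^ 2
  have hw : w ≤ 2 ^ 2 := by
    have := sq_le_one_iff_abs_le_one (l₁ * u 0) |>.2 h₁
    have := sq_le_one_iff_abs_le_one (l₂ * u 1) |>.2 h₂
    nlinarith
  have hsw : 0 < √w := Real.sqrt_pos.2 (by positivity)
  have hinner : |⟪nQ l₁ l₂ u, e1⟫| = |l₁ * u 0| / √w := by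
    simp [inner_e1, nQ, mk3, w, abs_mul, div_eq_inv_mul]
  rw [hinner, mul_div_assoc', le_div_iff₀ hsw, mul_comm 2]
  exact mul_le_mul_of_nonneg_left ((Real.sqrt_le_left zero_le_two).2 hw) (abs_nonneg _)

lemma abs_sub_le_of_mem_tube_e1 {x y₀ : E3} {s₀ r L : ℝ} (hx : x ∈ tube e1 y₀ s₀ r L) :
    |x 1 - y₀ 1| ≤ r :=
  calc |x 1 - y₀ 1| = ‖(x - ⟪x, e1⟫ • e1 - y₀) 1‖ := by simp [e1, mk3]
    _ ≤ ‖x - ⟪x, e1⟫ • e1 - y₀‖ := PiLp.norm_apply_le _ 1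
    _ ≤ r := hx.1

lemma extremeStrip_subset_image_box {l₁ l₂ r ε δ s₀ L : ℝ} {U : Set E2} {y₀ : E3}
    (hl₁ : l₁ ≠ 0) (hr : (|l₁| + |l₂|) * r ≤ 1) (hU : U ⊆ ball 0 r) :
    Xf l₁ l₂ '' U ∩ tube e1 y₀ s₀ δ L ∩ Xf l₁ l₂ '' {u | u ∈ U ∧ |⟪nQ l₁ l₂ u, e1⟫| ≤ ε} ⊆
      Xf l₁ l₂ '' (WithLp.toLp 2 ''
        (univ.pi ![closedBall 0 (2 * ε / |l₁|), closedBall (y₀ 1) δ] ∩ closedBall 0 r)) := by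
  rintro _ ⟨⟨-, hxt⟩, u, ⟨huU, hun⟩, rfl⟩
  have hu : ∀ i, |u i| ≤ r := fun i =>
    (PiLp.norm_apply_le u i).trans (mem_ball_zero_iff.1 (hU huU)).le
  have hr0 : 0 ≤ r := (abs_nonneg _).trans (hu 0)
  have hl : ∀ (l : ℝ) (i : Fin 2), |l| * r ≤ 1 → |l * u i| ≤ 1 := fun l i h => by
    rw [abs_mul]; exact (mul_le_mul_of_nonneg_left (hu i) (abs_nonneg _)).trans h
  have hu0 : |l₁ * u 0| ≤ 2 * ε :=
    (abs_mul_le_two_mul_abs_inner_nQ_e1 (hl l₁ 0 (by nlinarith [abs_nonneg l₂]))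
      (hl l₂ 1 (by nlinarith [abs_nonneg l₁]))).trans (by linarith)
  refine ⟨u, ⟨u.ofLp, ⟨?_, ?_⟩, rfl⟩, rfl⟩
  · simp only [mem_pi, mem_univ, forall_const, Fin.forall_fin_two, Matrix.cons_val_zero,
      Matrix.cons_val_one, mem_closedBall, Real.dist_eq, sub_zero]
    refine ⟨?_, abs_sub_le_of_mem_tube_e1 hxt⟩
    rw [le_div_iff₀ (abs_pos.2 hl₁), mul_comm, ← abs_mul]
    exact hu0
  · exact mem_closedBall_zero_iff.2 ((pi_norm_le_iff_of_nonneg hr0).2 hu)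

lemma hausdorffMeasure_extremeStrip_le {l₁ l₂ r ε δ s₀ L : ℝ} {U : Set E2} {y₀ : E3}
    (hl₁ : l₁ ≠ 0) (hr : (|l₁| + |l₂|) * r ≤ 1) (hU : U ⊆ ball 0 r) (hε : 0 ≤ ε) :
    μH[2] (Xf l₁ l₂ '' U ∩ tube e1 y₀ s₀ δ L ∩
        Xf l₁ l₂ '' {u | u ∈ U ∧ |⟪nQ l₁ l₂ u, e1⟫| ≤ ε}) ≤
      ENNReal.ofReal (24 * ε * δ / |l₁|) :=
  calc _ ≤ μH[2] (Xf l₁ l₂ '' (WithLp.toLp 2 ''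
          (univ.pi ![closedBall 0 (2 * ε / |l₁|), closedBall (y₀ 1) δ] ∩ closedBall 0 r))) :=
        measure_mono (extremeStrip_subset_image_box hl₁ hr hU)
    _ ≤ 3 * volume (univ.pi ![closedBall (0 : ℝ) (2 * ε / |l₁|), closedBall (y₀ 1) δ]) :=
        (hausdorffMeasure_image_Xf_le hr inter_subset_right).trans
          (by gcongr; exact inter_subset_left)
    _ = ENNReal.ofReal (24 * ε * δ / |l₁|) := by
        rw [volume_pi_pi, Fin.prod_univ_two]
        simp only [Matrix.cons_val_zero, Matrix.cons_val_one, Real.volume_closedBall]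
        rw [← ENNReal.ofReal_mul (by positivity), ← ENNReal.ofReal_ofNat 3,
          ← ENNReal.ofReal_mul (by norm_num)]
        ring_nf

lemma withDensity_ofReal_apply_le {α : Type*} [MeasurableSpace α] (μ : Measure α) {f : α → ℝ}
    {M : ℝ} (hf : ∀ x, f x ≤ M) (s : Set α) :
    μ.withDensity (fun x => ENNReal.ofReal (f x)) s ≤ ENNReal.ofReal M * μ s := by
  have hle : μ.withDensity (fun x => ENNReal.ofReal (f x)) ≤ ENNReal.ofReal M • μ := by
    rw [← withDensity_const]
    exact withDensity_mono (.of_forall fun x => ENNReal.ofReal_le_ofReal (hf x))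
  exact hle s

lemma muQ_apply_le {l₁ l₂ M : ℝ} {U : Set E2} {χ : E3 → ℝ} (hχ : ∀ x, χ x ≤ M) (s : Set E3) :
    muQ l₁ l₂ U χ s ≤ ENNReal.ofReal M * μH[2] s :=
  (withDensity_ofReal_apply_le _ hχ s).trans (by gcongr; exact Measure.restrict_le_self)

theorem extreme_strip_mass_upper_general (l₁ l₂ C₁ L Mχ : ℝ) (hl : 0 < l₁ * l₂)
    (hC₁ : 1 ≤ C₁) (hMχ : 0 ≤ Mχ) :
    ∃ r₁ : ℝ, 0 < r₁ ∧ ∃ ρ₀ ∈ Set.Ioc (0 : ℝ) 1, ∃ C : ℝ, 1 ≤ C ∧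
      ∀ U : Set E2, IsOpen U → U ⊆ Metric.ball (0 : E2) r₁ →
      ∀ χ : E3 → ℝ, (∀ x, 0 ≤ χ x) → (∀ x, χ x ≤ Mχ) →
        Function.support χ ⊆ Xf l₁ l₂ '' U →
        ∀ ρ : ℝ, 0 < ρ → ρ ≤ ρ₀ →
        ∀ y₀ : E3, ⟪y₀, e1⟫ = 0 → ∀ s₀ : ℝ,
          muQ l₁ l₂ U χ
              (Xf l₁ l₂ '' U ∩ tube e1 y₀ s₀ (C₁ * ρ) L ∩
                Xf l₁ l₂ '' {u : E2 | u ∈ U ∧ |⟪nQ l₁ l₂ u, e1⟫| ≤ Real.sqrt ρ}) ≤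
            ENNReal.ofReal (C * ρ ^ ((3 : ℝ) / 2)) := by
  have hl₁ : 0 < |l₁| := abs_pos.2 (left_ne_zero_of_mul hl.ne')
  have hden : 0 < 1 + |l₁| + |l₂| := by positivity
  have hr : (|l₁| + |l₂|) * (1 + |l₁| + |l₂|)⁻¹ ≤ 1 := by
    rw [mul_inv_le_iff₀ hden]; linarith
  refine ⟨_, inv_pos.2 hden, 1, ⟨one_pos, le_rfl⟩, 1 + 24 * Mχ * C₁ / |l₁|,
    le_add_of_nonneg_right (by positivity), fun U _ hU χ _ hχ _ ρ hρ _ y₀ _ s₀ => ?_⟩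
  have hρ32 : ρ ^ ((3 : ℝ) / 2) = √ρ * ρ := by
    rw [show (3 : ℝ) / 2 = 1 / 2 + 1 by norm_num, Real.rpow_add hρ, Real.rpow_one,
      ← Real.sqrt_eq_rpow]
  calc _ ≤ ENNReal.ofReal Mχ * ENNReal.ofReal (24 * √ρ * (C₁ * ρ) / |l₁|) :=
        (muQ_apply_le hχ _).trans <| by
          gcongr
          exact hausdorffMeasure_extremeStrip_le (abs_pos.1 hl₁) hr hU (by positivity)
    _ = ENNReal.ofReal (24 * Mχ * C₁ / |l₁| * ρ ^ ((3 : ℝ) / 2)) := by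
        rw [← ENNReal.ofReal_mul hMχ, hρ32]
        ring_nf
    _ ≤ ENNReal.ofReal ((1 + 24 * Mχ * C₁ / |l₁|) * ρ ^ ((3 : ℝ) / 2)) := by
        gcongr
        linarith

/-- upper bound `ρ^{3/2}` for the extreme mass in a tangent tube. -/
theorem extreme_strip_mass_upper (l₁ l₂ C₁ L Mχ : ℝ) (hl : 0 < l₁ * l₂)
    (hC₁ : 1 ≤ C₁) (hL : 1 ≤ L) (hMχ : 0 ≤ Mχ) :
    ∃ r₁ : ℝ, 0 < r₁ ∧ ∃ ρ₀ ∈ Set.Ioc (0 : ℝ) 1, ∃ C : ℝ, 1 ≤ C ∧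
      ∀ U : Set E2, IsOpen U → U ⊆ Metric.ball (0 : E2) r₁ →
      ∀ χ : E3 → ℝ, (∀ x, 0 ≤ χ x) → (∀ x, χ x ≤ Mχ) →
        Function.support χ ⊆ Xf l₁ l₂ '' U →
        ∀ ρ : ℝ, 0 < ρ → ρ ≤ ρ₀ →
        ∀ y₀ : E3, ⟪y₀, e1⟫ = 0 → ∀ s₀ : ℝ,
          muQ l₁ l₂ U χ
              (Xf l₁ l₂ '' U ∩ tube e1 y₀ s₀ (C₁ * ρ) L ∩
                Xf l₁ l₂ '' {u : E2 | u ∈ U ∧ |⟪nQ l₁ l₂ u, e1⟫| ≤ Real.sqrt ρ}) ≤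
            ENNReal.ofReal (C * ρ ^ ((3 : ℝ) / 2)) :=
  extreme_strip_mass_upper_general l₁ l₂ C₁ L Mχ hl hC₁ hMχ
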